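/- (Lemma 2.4) Let c > 0, M ≥ 0, let f : ℝ → ℝ be measurable and even with 0 ≤ f(λ) ≤ M for all λ, and let φ ∈ L²(ℝ, ℂ) satisfy φ(−λ) = conj(φ(λ)) for almost every λ. For T > 0 and τ₁, τ₂ ∈ ℝ set C_T(τ₁,τ₂) = (2π/c²) ∬_{ℝ²} [e^{i(τ₁−τ₂)λ₂}·|φ(λ₂)|² + e^{i(τ₁λ₁+τ₂λ₂)}·φ(λ₁)·φ(λ₂)]·Φ_T(λ₂−λ₁)·f(λ₁)·f(λ₂) dλ₁ dλ₂. Then for all T > 0 and τ₁, τ₂ ∈ ℝ: |C_T(τ₁,τ₁) − 2·C_T(τ₁,τ₂) + C_T(τ₂,τ₂)| ≤ (16π/c²)·M²·‖φ‖_{L²}·( ∫_ℝ sin²((τ₁−τ₂)λ/2)·|φ(λ)|² dλ )^{1/2}. -/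

import Mathlib

open MeasureTheory Filter Set

noncomputable section

/-- The Fejér kernel on `ℝ`:
`Φ_T(λ) = (1/(2πT))·(sin(Tλ/2)/(λ/2))²` for `λ ≠ 0`, with `Φ_T(0) = T/(2π)`. -/
def fejer (T l : ℝ) : ℝ :=
  if l = 0 then T / (2 * Real.pi)
  else (1 / (2 * Real.pi * T)) * (Real.sin (T * l / 2) / (l / 2)) ^ 2

/-- FTC on `(0,∞)` for nonnegative derivatives. -/
lemma ftc_Ioi {F f : ℝ → ℝ} {L : ℝ}
    (hd : ∀ x ∈ Ici (0:ℝ), HasDerivAt F (f x) x)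
    (h0 : ∀ x ∈ Ioi (0:ℝ), 0 ≤ f x)
    (hlim : Tendsto F atTop (nhds L)) :
    IntegrableOn f (Ioi (0:ℝ)) ∧ ∫ x in Ioi (0:ℝ), f x = L - F 0 :=
  ⟨integrableOn_Ioi_deriv_of_nonneg' hd h0 hlim,
   integral_Ioi_of_hasDerivAt_of_nonneg' hd h0 hlim⟩

lemma exp_sin_sq (t : ℝ) (ht : 0 < t) :
    IntegrableOn (fun x => Real.exp (-(t*x)) * Real.sin x ^ 2) (Ioi (0:ℝ)) ∧
    ∫ x in Ioi (0:ℝ), Real.exp (-(t*x)) * Real.sin x ^ 2 = 2/(t*(t^2+4)) := by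
  have ht4 : t^2 + 4 ≠ 0 := by positivity
  set A : ℝ := -(1/(2*t)) with hA
  set B : ℝ := t/(2*(t^2+4)) with hB
  set C : ℝ := -(1/(t^2+4)) with hC
  set F : ℝ → ℝ := fun x => Real.exp (-(t*x)) * (A + B * Real.cos (2*x) + C * Real.sin (2*x))
    with hF
  have hd : ∀ x ∈ Ici (0:ℝ), HasDerivAt F (Real.exp (-(t*x)) * Real.sin x ^ 2) x := by
    intro x _
    have h1 : HasDerivAt (fun x : ℝ => -(t*x)) (-t) x := by
      simpa using (hasDerivAt_id x).const_mul (-t)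
    have he : HasDerivAt (fun x : ℝ => Real.exp (-(t*x))) (Real.exp (-(t*x)) * (-t)) x := h1.exp
    have h2 : HasDerivAt (fun x : ℝ => 2*x) 2 x := by simpa using (hasDerivAt_id x).const_mul 2
    have hc : HasDerivAt (fun x : ℝ => A + B * Real.cos (2*x) + C * Real.sin (2*x))
        (B * (-Real.sin (2*x) * 2) + C * (Real.cos (2*x) * 2)) x :=
      ((h2.cos.const_mul B).const_add A).add (h2.sin.const_mul C)
    have := he.mul hc
    refine this.congr_deriv ?_
    have hs : Real.sin x ^ 2 = 1/2 - Real.cos (2*x)/2 := by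
      rw [Real.cos_two_mul]; nlinarith [Real.sin_sq_add_cos_sq x]
    rw [hs, hA, hB, hC]
    field_simp
    ring
  have h0 : ∀ x ∈ Ioi (0:ℝ), 0 ≤ Real.exp (-(t*x)) * Real.sin x ^ 2 := by
    intro x _; positivity
  have hlim : Tendsto F atTop (nhds 0) := by
    have hb : ∀ x : ℝ, ‖F x‖ ≤ (|A| + |B| + |C|) * Real.exp (-(t*x)) := by
      intro x
      have h1 : ‖F x‖ = Real.exp (-(t*x)) * |A + B * Real.cos (2*x) + C * Real.sin (2*x)| := by
        rw [hF]; simp [abs_mul, Real.abs_exp]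
      rw [h1, mul_comm]
      gcongr
      have hb1 : |B * Real.cos (2*x)| ≤ |B| := by
        rw [abs_mul]
        exact mul_le_of_le_one_right (abs_nonneg _) (Real.abs_cos_le_one _)
      have hb2 : |C * Real.sin (2*x)| ≤ |C| := by
        rw [abs_mul]
        exact mul_le_of_le_one_right (abs_nonneg _) (Real.abs_sin_le_one _)
      calc |A + B * Real.cos (2*x) + C * Real.sin (2*x)|
          ≤ |A| + |B * Real.cos (2*x)| + |C * Real.sin (2*x)| := abs_add_three _ _ _
        _ ≤ |A| + |B| + |C| := by linarith
    have hexp : Tendsto (fun x : ℝ => (|A| + |B| + |C|) * Real.exp (-(t*x))) atTop (nhds 0) := by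
      have h1 : Tendsto (fun x : ℝ => t * x) atTop atTop :=
        Tendsto.const_mul_atTop ht tendsto_id
      have h2 := (Real.tendsto_exp_neg_atTop_nhds_zero).comp h1
      simpa using h2.const_mul (|A| + |B| + |C|)
    exact squeeze_zero_norm hb hexp
  have := ftc_Ioi hd h0 hlim
  refine ⟨this.1, ?_⟩
  rw [this.2, hF]
  simp only [mul_zero, neg_zero, Real.exp_zero, Real.cos_zero, Real.sin_zero, hA, hB, hC]
  field_simp
  ring

lemma t_exp_int (x : ℝ) (hx : 0 < x) :
    IntegrableOn (fun t => t * Real.exp (-(t*x))) (Ioi (0:ℝ)) ∧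
    ∫ t in Ioi (0:ℝ), t * Real.exp (-(t*x)) = 1/x^2 := by
  have hx' : x ≠ 0 := hx.ne'
  set G : ℝ → ℝ := fun t => -((t/x) + 1/x^2) * Real.exp (-(t*x)) with hG
  have hd : ∀ t ∈ Ici (0:ℝ), HasDerivAt G (t * Real.exp (-(t*x))) t := by
    intro t _
    have h1 : HasDerivAt (fun t : ℝ => -((t/x) + 1/x^2)) (-(1/x)) t :=
      (((hasDerivAt_id t).div_const x).add_const (1/x^2)).neg
    have h2 : HasDerivAt (fun t : ℝ => -(t*x)) (-x) t := by
      have : HasDerivAt (fun t : ℝ => t*x) x t := by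
        simpa using (hasDerivAt_id t).mul_const x
      exact this.neg
    have := h1.mul h2.exp
    refine this.congr_deriv ?_
    field_simp
    ring
  have h0 : ∀ t ∈ Ioi (0:ℝ), 0 ≤ t * Real.exp (-(t*x)) := by
    intro t ht'; have : (0:ℝ) ≤ t := (le_of_lt ht')
    positivity
  have hlim : Tendsto G atTop (nhds 0) := by
    have hxt : Tendsto (fun t : ℝ => x * t) atTop atTop :=
      Tendsto.const_mul_atTop hx tendsto_id
    have h1 : Tendsto (fun t : ℝ => t * Real.exp (-(t*x))) atTop (nhds 0) := by
      have h2 := (Real.tendsto_pow_mul_exp_neg_atTop_nhds_zero 1).comp hxt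
      have h3 := h2.const_mul (1/x)
      rw [mul_zero] at h3
      refine h3.congr (fun t => ?_)
      simp only [Function.comp_apply, pow_one]
      field_simp
    have h4 : Tendsto (fun t : ℝ => Real.exp (-(t*x))) atTop (nhds 0) := by
      have := (Real.tendsto_exp_neg_atTop_nhds_zero).comp hxt
      refine this.congr (fun t => ?_)
      simp only [Function.comp_apply]
      ring_nf
    have := ((h1.const_mul (1/x)).add (h4.const_mul (1/x^2))).neg
    rw [mul_zero, mul_zero, add_zero, neg_zero] at this
    refine this.congr (fun t => ?_)
    rw [hG]
    field_simp
  have := ftc_Ioi hd h0 hlim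
  refine ⟨this.1, ?_⟩
  rw [this.2, hG]
  simp [Real.exp_zero]

lemma two_div_int :
    IntegrableOn (fun t => 2/(t^2+4)) (Ioi (0:ℝ)) ∧
    ∫ t in Ioi (0:ℝ), 2/(t^2+4) = Real.pi/2 := by
  set F : ℝ → ℝ := fun t => Real.arctan (t/2) with hF
  have hd : ∀ t ∈ Ici (0:ℝ), HasDerivAt F (2/(t^2+4)) t := by
    intro t _
    have h1 : HasDerivAt (fun t : ℝ => t/2) (1/2) t := (hasDerivAt_id t).div_const 2
    have := (Real.hasDerivAt_arctan (t/2)).comp t h1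
    refine this.congr_deriv ?_
    have h2 : (1:ℝ) + (t/2)^2 ≠ 0 := by positivity
    field_simp
    ring
  have h0 : ∀ t ∈ Ioi (0:ℝ), 0 ≤ 2/(t^2+4) := fun t _ => by positivity
  have hlim : Tendsto F atTop (nhds (Real.pi/2)) := by
    have h1 : Tendsto (fun t : ℝ => t/2) atTop atTop :=
      tendsto_id.atTop_div_const two_pos
    exact (Real.tendsto_arctan_atTop.mono_right nhdsWithin_le_nhds).comp h1
  have := ftc_Ioi hd h0 hlim
  refine ⟨this.1, ?_⟩
  rw [this.2, hF]
  simp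

lemma sinc_sq_Ioi :
    IntegrableOn (fun x => (Real.sin x / x)^2) (Ioi (0:ℝ)) ∧
    ∫ x in Ioi (0:ℝ), (Real.sin x / x)^2 = Real.pi/2 := by
  set W : ℝ × ℝ → ℝ := fun z => Real.sin z.1 ^ 2 * (z.2 * Real.exp (-(z.2 * z.1))) with hW
  have hWc : Continuous W := by fun_prop
  have hWnn : ∀ z : ℝ × ℝ, 0 ≤ z.2 → 0 ≤ W z := by
    intro z hz; rw [hW]; positivity
  have key : ∫⁻ x in Ioi (0:ℝ), ENNReal.ofReal ((Real.sin x / x)^2)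
      = ENNReal.ofReal (Real.pi/2) := by
    have e1 : ∀ x ∈ Ioi (0:ℝ), ENNReal.ofReal ((Real.sin x / x)^2)
        = ∫⁻ t in Ioi (0:ℝ), ENNReal.ofReal (W (x, t)) := by
      intro x hx
      have hx0 : (0:ℝ) < x := hx
      have hint : Integrable (fun t => Real.sin x ^ 2 * (t * Real.exp (-(t*x))))
          (volume.restrict (Ioi (0:ℝ))) := ((t_exp_int x hx0).1).const_mul _
      have hnn : 0 ≤ᵐ[volume.restrict (Ioi (0:ℝ))]
          fun t => Real.sin x ^ 2 * (t * Real.exp (-(t*x))) := by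
        filter_upwards [ae_restrict_mem measurableSet_Ioi] with t ht
        have : (0:ℝ) ≤ t := le_of_lt ht
        positivity
      have h2 := ofReal_integral_eq_lintegral_ofReal hint hnn
      rw [← h2, integral_const_mul, (t_exp_int x hx0).2]
      congr 1
      · rw [div_pow]
        field_simp
    rw [setLIntegral_congr_fun measurableSet_Ioi e1]
    have hmeas : AEMeasurable (fun z : ℝ × ℝ => ENNReal.ofReal (W z))
        ((volume.restrict (Ioi (0:ℝ))).prod (volume.restrict (Ioi (0:ℝ)))) :=
      (ENNReal.measurable_ofReal.comp hWc.measurable).aemeasurable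
    rw [lintegral_lintegral_swap hmeas]
    have e2 : ∀ t ∈ Ioi (0:ℝ), (∫⁻ x in Ioi (0:ℝ), ENNReal.ofReal (W (x, t)))
        = ENNReal.ofReal (2/(t^2+4)) := by
      intro t ht
      have ht0 : (0:ℝ) < t := ht
      have hint : Integrable (fun x => t * (Real.exp (-(t*x)) * Real.sin x ^ 2))
          (volume.restrict (Ioi (0:ℝ))) := ((exp_sin_sq t ht0).1).const_mul _
      have hnn : 0 ≤ᵐ[volume.restrict (Ioi (0:ℝ))]
          fun x => t * (Real.exp (-(t*x)) * Real.sin x ^ 2) := by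
        filter_upwards with x
        have : (0:ℝ) ≤ t := le_of_lt ht0
        positivity
      have h2 := ofReal_integral_eq_lintegral_ofReal hint hnn
      have e3 : ∀ x : ℝ, W (x, t) = t * (Real.exp (-(t*x)) * Real.sin x ^ 2) := by
        intro x; rw [hW]; ring_nf
      simp_rw [e3]
      rw [← h2, integral_const_mul, (exp_sin_sq t ht0).2]
      congr 1
      have ht4 : t^2 + 4 ≠ 0 := by positivity
      field_simp
    rw [setLIntegral_congr_fun measurableSet_Ioi e2]
    have hnn2 : 0 ≤ᵐ[volume.restrict (Ioi (0:ℝ))] fun t : ℝ => 2/(t^2+4) := by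
      filter_upwards with t; positivity
    rw [← ofReal_integral_eq_lintegral_ofReal two_div_int.1 hnn2, two_div_int.2]
  have hmeas : AEStronglyMeasurable (fun x => (Real.sin x / x)^2)
      (volume.restrict (Ioi (0:ℝ))) := by
    refine (Measurable.aestronglyMeasurable ?_)
    exact (Real.measurable_sin.div measurable_id).pow_const 2
  have hnn : 0 ≤ᵐ[volume.restrict (Ioi (0:ℝ))] fun x => (Real.sin x / x)^2 := by
    filter_upwards with x; positivity
  have hint : IntegrableOn (fun x => (Real.sin x / x)^2) (Ioi (0:ℝ)) := by
    refine ⟨hmeas, ?_⟩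
    rw [hasFiniteIntegral_iff_ofReal hnn, key]
    exact ENNReal.ofReal_lt_top
  refine ⟨hint, ?_⟩
  rw [integral_eq_lintegral_of_nonneg_ae hnn hmeas, key,
    ENNReal.toReal_ofReal (by positivity)]

lemma sinc_sq_real :
    Integrable (fun x : ℝ => (Real.sin x / x)^2) ∧
    ∫ x : ℝ, (Real.sin x / x)^2 = Real.pi := by
  have heven : (fun x : ℝ => (Real.sin |x| / |x|)^2) = fun x : ℝ => (Real.sin x / x)^2 := by
    funext x
    rcases le_or_gt 0 x with h | h
    · rw [abs_of_nonneg h]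
    · rw [abs_of_neg h, Real.sin_neg, neg_div_neg_eq]
  constructor
  · have int_Iic : IntegrableOn (fun x : ℝ => (Real.sin x / x)^2) (Iic 0) := by
      rw [← Measure.map_neg_eq_self (volume : Measure ℝ)]
      have m : MeasurableEmbedding fun x : ℝ => -x := (Homeomorph.neg ℝ).measurableEmbedding
      rw [m.integrableOn_map_iff]
      have : ((fun x : ℝ => -x) ⁻¹' Iic 0) = Ici 0 := by
        ext x; simp
      rw [this]
      have heq : ((fun x : ℝ => (Real.sin x / x)^2) ∘ fun x : ℝ => -x)
          = fun x : ℝ => (Real.sin x / x)^2 := by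
        funext x; simp only [Function.comp_apply, Real.sin_neg, neg_div_neg_eq]
      rw [heq]
      exact Iff.mpr integrableOn_Ici_iff_integrableOn_Ioi sinc_sq_Ioi.1
    have := int_Iic.union sinc_sq_Ioi.1
    rwa [Iic_union_Ioi, integrableOn_univ] at this
  · rw [← heven, integral_comp_abs (f := fun x => (Real.sin x / x)^2), sinc_sq_Ioi.2]
    ring

lemma fejer_nonneg {T : ℝ} (hT : 0 < T) (l : ℝ) : 0 ≤ fejer T l := by
  unfold fejer
  split
  · positivity
  · positivity

lemma fejer_even (T l : ℝ) : fejer T (-l) = fejer T l := by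
  unfold fejer
  rcases eq_or_ne l 0 with rfl | hl
  · simp
  · rw [if_neg (neg_ne_zero.mpr hl), if_neg hl]
    rw [show T*(-l)/2 = -(T*l/2) by ring, show (-l)/2 = -(l/2) by ring,
      Real.sin_neg, neg_div_neg_eq]

lemma measurable_fejer (T : ℝ) : Measurable (fejer T) := by
  unfold fejer
  exact Measurable.ite (measurableSet_singleton 0) measurable_const
    ((((Real.measurable_sin.comp ((measurable_id.const_mul T).div_const 2)).div
      (measurable_id.div_const 2)).pow_const 2).const_mul _)

lemma fejer_int {T : ℝ} (hT : 0 < T) :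
    Integrable (fejer T) ∧ ∫ l : ℝ, fejer T l = 1 := by
  have hT' : T ≠ 0 := hT.ne'
  have ha : T/2 ≠ 0 := by positivity
  have hpi : Real.pi ≠ 0 := Real.pi_ne_zero
  have he : (fejer T) =ᵐ[volume]
      fun l => (T/(2*Real.pi)) * (Real.sin ((T/2)*l) / ((T/2)*l))^2 := by
    have h0 : ∀ᵐ l : ℝ, l ≠ 0 := by
      refine eventually_of_mem (U := {(0:ℝ)}ᶜ) ?_ (fun x hx => hx)
      rw [mem_ae_iff, compl_compl]
      exact measure_singleton 0
    filter_upwards [h0] with l hl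
    unfold fejer
    rw [if_neg hl]
    rw [show (T/2)*l = T*l/2 by ring]
    rw [div_pow, div_pow, div_pow]
    field_simp
  have hbase : Integrable (fun l : ℝ => (Real.sin ((T/2)*l) / ((T/2)*l))^2) := by
    have := (integrable_comp_mul_left_iff
      (fun x : ℝ => (Real.sin x / x)^2) ha).mpr sinc_sq_real.1
    simpa using this
  constructor
  · exact (hbase.const_mul _).congr he.symm
  · rw [integral_congr_ae he]
    rw [integral_const_mul]
    have := Measure.integral_comp_mul_left (fun x : ℝ => (Real.sin x / x)^2) (T/2)
    rw [this, sinc_sq_real.2]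
    rw [abs_of_pos (by positivity : (0:ℝ) < (T/2)⁻¹)]
    rw [smul_eq_mul]
    field_simp


lemma abs_one_sub_exp (θ : ℝ) :
    ‖1 - Complex.exp (Complex.I * θ)‖ = 2 * |Real.sin (θ/2)| := by
  rw [show Complex.I * θ = (θ : ℂ) * Complex.I from mul_comm _ _, Complex.exp_mul_I]
  have h2 : (1 : ℂ) - (Complex.cos θ + Complex.sin θ * Complex.I)
      = ((1 - Real.cos θ : ℝ) : ℂ) + ((-Real.sin θ : ℝ) : ℂ) * Complex.I := by
    rw [← Complex.ofReal_cos, ← Complex.ofReal_sin]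
    push_cast
    ring
  rw [h2, Complex.norm_add_mul_I]
  rw [show (1 - Real.cos θ)^2 + (-Real.sin θ)^2 = (2 * |Real.sin (θ/2)|)^2 by
    rw [mul_pow, sq_abs]
    have hc : Real.cos (2*(θ/2)) = Real.cos θ := by congr 1; ring
    nlinarith [Real.sin_sq_add_cos_sq θ, Real.sin_sq_add_cos_sq (θ/2), Real.cos_sq (θ/2), hc]]
  exact Real.sqrt_sq (by positivity)

lemma abs_exp_sub_exp (u v : ℝ) :
    ‖Complex.exp (Complex.I * u) - Complex.exp (Complex.I * v)‖
      = 2 * |Real.sin ((u - v)/2)| := by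
  have h1 : Complex.exp (Complex.I * u) - Complex.exp (Complex.I * v)
      = Complex.exp (Complex.I * v) * (Complex.exp (Complex.I * ((u - v : ℝ) : ℂ)) - 1) := by
    rw [mul_sub, mul_one, ← Complex.exp_add]
    push_cast
    ring_nf
  rw [h1, norm_mul]
  have h2 : ‖Complex.exp (Complex.I * v)‖ = 1 := by
    rw [Complex.norm_exp]
    simp
  rw [h2, one_mul, ← norm_neg, neg_sub, abs_one_sub_exp]

lemma norm_exp_I_mul_ofReal (r : ℝ) : ‖Complex.exp (Complex.I * (r : ℂ))‖ = 1 := by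
  rw [Complex.norm_exp]
  simp

lemma conv_integrand_integrable {k w : ℝ → ℝ} (hk : Integrable k) (hw : Integrable w) :
    Integrable (fun p : ℝ × ℝ => w p.2 * k (p.1 - p.2)) := by
  rw [Measure.volume_eq_prod ℝ ℝ]
  have := hw.convolution_integrand (ContinuousLinearMap.mul ℝ ℝ) hk
  simpa [ContinuousLinearMap.mul_apply'] using this

lemma conv_integral {k w : ℝ → ℝ} (hk : Integrable k) (hw : Integrable w) :
    ∫ p : ℝ × ℝ, w p.2 * k (p.1 - p.2) = (∫ x, w x) * ∫ x, k x := by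
  have hint := conv_integrand_integrable hk hw
  rw [Measure.volume_eq_prod ℝ ℝ] at hint ⊢
  rw [integral_prod_symm _ hint]
  have h1 : ∀ y : ℝ, (∫ x : ℝ, w y * k (x - y)) = w y * ∫ x, k x := by
    intro y
    rw [integral_const_mul]
    congr 1
    exact integral_sub_right_eq_self k y
  simp_rw [h1]
  rw [integral_mul_const]

lemma conv2 {k w : ℝ → ℝ} (hk : Integrable k) (hw : Integrable w) :
    Integrable (fun p : ℝ × ℝ => k (p.2 - p.1) * w p.2) ∧
    (∫ p : ℝ × ℝ, k (p.2 - p.1) * w p.2) = (∫ x, k x) * ∫ x, w x := by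
  have hkn : Integrable (fun x : ℝ => k (-x)) := hk.comp_neg
  have he : (fun p : ℝ × ℝ => k (p.2 - p.1) * w p.2)
      = fun p : ℝ × ℝ => w p.2 * (fun x : ℝ => k (-x)) (p.1 - p.2) := by
    funext p
    simp only [neg_sub]
    ring
  constructor
  · rw [he]
    exact conv_integrand_integrable hkn hw
  · rw [he, conv_integral hkn hw, integral_neg_eq_self]
    ring

lemma conv3 {k w : ℝ → ℝ} (hk : Integrable k) (hw : Integrable w) :
    Integrable (fun p : ℝ × ℝ => k (p.2 - p.1) * w p.1) ∧
    (∫ p : ℝ × ℝ, k (p.2 - p.1) * w p.1) = (∫ x, k x) * ∫ x, w x := by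
  have h := conv_integrand_integrable hk hw
  have he : (fun p : ℝ × ℝ => k (p.2 - p.1) * w p.1)
      = fun z : ℝ × ℝ => (fun p : ℝ × ℝ => w p.2 * k (p.1 - p.2)) z.swap := by
    funext z
    simp only [Prod.fst_swap, Prod.snd_swap]
    ring
  constructor
  · rw [he, Measure.volume_eq_prod ℝ ℝ]
    exact (Measure.volume_eq_prod ℝ ℝ ▸ h : Integrable _ (volume.prod volume)).swap
  · rw [he]
    have h2 := integral_prod_swap (μ := (volume : Measure ℝ)) (ν := (volume : Measure ℝ))
      (fun p : ℝ × ℝ => w p.2 * k (p.1 - p.2))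
    rw [Measure.volume_eq_prod ℝ ℝ, h2, ← Measure.volume_eq_prod ℝ ℝ, conv_integral hk hw,
      mul_comm]

lemma aesm_snd {E : Type*} [TopologicalSpace E] {g : ℝ → E}
    (hg : AEStronglyMeasurable g (volume : Measure ℝ)) :
    AEStronglyMeasurable (fun p : ℝ × ℝ => g p.2) (volume : Measure (ℝ × ℝ)) := by
  rw [Measure.volume_eq_prod ℝ ℝ]
  exact hg.comp_quasiMeasurePreserving Measure.quasiMeasurePreserving_snd

lemma aesm_fst {E : Type*} [TopologicalSpace E] {g : ℝ → E}
    (hg : AEStronglyMeasurable g (volume : Measure ℝ)) :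
    AEStronglyMeasurable (fun p : ℝ × ℝ => g p.1) (volume : Measure (ℝ × ℝ)) := by
  rw [Measure.volume_eq_prod ℝ ℝ]
  exact hg.comp_quasiMeasurePreserving Measure.quasiMeasurePreserving_fst


/-- The correlation function
`C_T(τ₁,τ₂) = (2π/c²)∬ [e^{i(τ₁−τ₂)λ₂}|φ(λ₂)|² + e^{i(τ₁λ₁+τ₂λ₂)}φ(λ₁)φ(λ₂)]
   Φ_T(λ₂−λ₁) f(λ₁) f(λ₂) dλ₁dλ₂`. -/
def Ccorr (c : ℝ) (f : ℝ → ℝ) (φ : ℝ → ℂ) (T τ₁ τ₂ : ℝ) : ℂ :=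
  ((2 * Real.pi / c ^ 2 : ℝ) : ℂ) *
    ∫ p : ℝ × ℝ,
      (Complex.exp (Complex.I * (((τ₁ - τ₂) * p.2 : ℝ) : ℂ))
          * ((‖φ p.2‖ ^ 2 : ℝ) : ℂ)
        + Complex.exp (Complex.I * ((τ₁ * p.1 + τ₂ * p.2 : ℝ) : ℂ)) * φ p.1 * φ p.2)
      * ((fejer T (p.2 - p.1) * f p.1 * f p.2 : ℝ) : ℂ)

/-- Lemma 2.4.  Let `c > 0`, `M ≥ 0`, `f : ℝ → ℝ` measurable, even, with
`0 ≤ f ≤ M`, and `φ ∈ L²(ℝ, ℂ)` conjugate-symmetric a.e.  Then for all `T > 0` and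
`τ₁, τ₂ ∈ ℝ`,
`|C_T(τ₁,τ₁) − 2C_T(τ₁,τ₂) + C_T(τ₂,τ₂)|
  ≤ (16π/c²)·M²·‖φ‖_{L²}·(∫ sin²((τ₁−τ₂)λ/2)|φ(λ)|² dλ)^{1/2}`. -/
theorem stmt6 (c M : ℝ) (hc : 0 < c) (hM : 0 ≤ M)
    (f : ℝ → ℝ) (hf : Measurable f) (hfeven : ∀ l : ℝ, f (-l) = f l)
    (hf0 : ∀ l : ℝ, 0 ≤ f l) (hfM : ∀ l : ℝ, f l ≤ M)
    (φ : ℝ → ℂ) (hφ : MemLp φ 2)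
    (hφsym : ∀ᵐ l : ℝ, φ (-l) = starRingEnd ℂ (φ l))
    (T : ℝ) (hT : 0 < T) (τ₁ τ₂ : ℝ) :
    ‖Ccorr c f φ T τ₁ τ₁ - 2 * Ccorr c f φ T τ₁ τ₂ + Ccorr c f φ T τ₂ τ₂‖
      ≤ (16 * Real.pi / c ^ 2) * M ^ 2 * Real.sqrt (∫ l : ℝ, ‖φ l‖ ^ 2)
        * Real.sqrt (∫ l : ℝ, Real.sin ((τ₁ - τ₂) * l / 2) ^ 2 * ‖φ l‖ ^ 2) := by
  have hπ := Real.pi_pos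
  -- kernel facts
  have hKint : Integrable (fejer T) := (fejer_int hT).1
  have hKval : ∫ l : ℝ, fejer T l = 1 := (fejer_int hT).2
  have hK0 : ∀ l, 0 ≤ fejer T l := fejer_nonneg hT
  -- |φ| facts
  have ha0 : ∀ l, 0 ≤ ‖φ l‖ := fun l => norm_nonneg _
  have haL2 : MemLp (fun l : ℝ => ‖φ l‖) 2 (volume : Measure ℝ) := by
    have := hφ.norm
    simpa using this
  have haM : AEStronglyMeasurable (fun l : ℝ => ‖φ l‖) volume := haL2.1
  have ha2int : Integrable (fun l : ℝ => ‖φ l‖ ^ 2) := haL2.integrable_sq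
  have ha2M : AEStronglyMeasurable (fun l : ℝ => ‖φ l‖ ^ 2) volume := by
    simpa [pow_two, Pi.mul_def] using haM.mul haM
  have hsm : Measurable (fun l : ℝ => Real.sin ((τ₁ - τ₂) * l / 2)) :=
    Real.measurable_sin.comp ((measurable_id.const_mul (τ₁ - τ₂)).div_const 2)
  -- bounds for the f-factor
  have hffnn : ∀ (x y : ℝ), 0 ≤ fejer T (y - x) * f x * f y :=
    fun x y => mul_nonneg (mul_nonneg (hK0 _) (hf0 x)) (hf0 y)
  have hff : ∀ (x y : ℝ), fejer T (y - x) * f x * f y ≤ fejer T (y - x) * M ^ 2 := by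
    intro x y
    calc fejer T (y - x) * f x * f y ≤ fejer T (y - x) * M * M :=
          mul_le_mul (mul_le_mul le_rfl (hfM x) (hf0 x) (hK0 _)) (hfM y) (hf0 y)
            (mul_nonneg (hK0 _) hM)
      _ = fejer T (y - x) * M ^ 2 := by ring
  -- integrable weights
  have hw1int : Integrable (fun l : ℝ => |Real.sin ((τ₁ - τ₂) * l / 2)| * ‖φ l‖ ^ 2) := by
    refine ha2int.mono' ((hsm.abs.aestronglyMeasurable).mul ha2M)
      (Filter.Eventually.of_forall fun l => ?_)
    rw [Real.norm_eq_abs, abs_of_nonneg (by positivity)]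
    exact mul_le_of_le_one_left (by positivity) (Real.abs_sin_le_one _)
  have hgM : AEStronglyMeasurable
      (fun l : ℝ => |Real.sin ((τ₁ - τ₂) * l / 2)| * ‖φ l‖) volume :=
    (hsm.abs.aestronglyMeasurable).mul haM
  have hg2int : Integrable (fun l : ℝ => (|Real.sin ((τ₁ - τ₂) * l / 2)| * ‖φ l‖) ^ 2) := by
    refine ha2int.mono' (by simpa [pow_two, Pi.mul_def] using hgM.mul hgM)
      (Filter.Eventually.of_forall fun l => ?_)
    rw [Real.norm_eq_abs, abs_of_nonneg (by positivity)]
    have h1 : |Real.sin ((τ₁ - τ₂) * l / 2)| * ‖φ l‖ ≤ 1 * ‖φ l‖ :=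
      mul_le_mul_of_nonneg_right (Real.abs_sin_le_one _) (ha0 l)
    calc (|Real.sin ((τ₁ - τ₂) * l / 2)| * ‖φ l‖) ^ 2
        ≤ (1 * ‖φ l‖) ^ 2 := by
          have h0 : 0 ≤ |Real.sin ((τ₁ - τ₂) * l / 2)| * ‖φ l‖ := by positivity
          exact pow_le_pow_left₀ h0 h1 2
      _ = ‖φ l‖ ^ 2 := by ring
  -- the two families of integrands
  set R : ℝ → (ℝ × ℝ) → ℂ := fun θ p =>
    Complex.exp (Complex.I * ((θ * p.2 : ℝ) : ℂ)) * ((‖φ p.2‖ ^ 2 : ℝ) : ℂ)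
      * ((fejer T (p.2 - p.1) * f p.1 * f p.2 : ℝ) : ℂ) with hRdef
  set Q : ℝ → ℝ → (ℝ × ℝ) → ℂ := fun σ τ p =>
    Complex.exp (Complex.I * ((σ * p.1 + τ * p.2 : ℝ) : ℂ)) * φ p.1 * φ p.2
      * ((fejer T (p.2 - p.1) * f p.1 * f p.2 : ℝ) : ℂ) with hQdef
  -- measurability
  have hKffM : AEStronglyMeasurable
      (fun p : ℝ × ℝ => ((fejer T (p.2 - p.1) * f p.1 * f p.2 : ℝ) : ℂ)) volume := by
    apply Complex.continuous_ofReal.comp_aestronglyMeasurable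
    exact ((((measurable_fejer T).comp (measurable_snd.sub measurable_fst)).mul
      (hf.comp measurable_fst)).mul (hf.comp measurable_snd)).aestronglyMeasurable
  have hexpM : ∀ θ : ℝ, AEStronglyMeasurable
      (fun p : ℝ × ℝ => Complex.exp (Complex.I * ((θ * p.2 : ℝ) : ℂ))) volume := by
    intro θ
    apply Continuous.aestronglyMeasurable
    exact Complex.continuous_exp.comp (continuous_const.mul
      (Complex.continuous_ofReal.comp (continuous_const.mul continuous_snd)))
  have hexpM2 : ∀ σ τ : ℝ, AEStronglyMeasurable
      (fun p : ℝ × ℝ => Complex.exp (Complex.I * ((σ * p.1 + τ * p.2 : ℝ) : ℂ))) volume := by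
    intro σ τ
    apply Continuous.aestronglyMeasurable
    exact Complex.continuous_exp.comp (continuous_const.mul
      (Complex.continuous_ofReal.comp ((continuous_const.mul continuous_fst).add
        (continuous_const.mul continuous_snd))))
  have habs2M : AEStronglyMeasurable
      (fun p : ℝ × ℝ => ((‖φ p.2‖ ^ 2 : ℝ) : ℂ)) volume := by
    apply Complex.continuous_ofReal.comp_aestronglyMeasurable
    exact aesm_snd ha2M
  have hRM : ∀ θ, AEStronglyMeasurable (R θ) volume := fun θ =>
    ((hexpM θ).mul habs2M).mul hKffM
  have hQM : ∀ σ τ, AEStronglyMeasurable (Q σ τ) volume := fun σ τ =>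
    (((hexpM2 σ τ).mul (aesm_fst hφ.1)).mul (aesm_snd hφ.1)).mul hKffM
  -- norms
  have hRnorm : ∀ θ (p : ℝ × ℝ), ‖R θ p‖
      = ‖φ p.2‖ ^ 2 * (fejer T (p.2 - p.1) * f p.1 * f p.2) := by
    intro θ p
    rw [hRdef]
    simp only [norm_mul]
    rw [norm_exp_I_mul_ofReal, Complex.norm_real, Complex.norm_real, Real.norm_eq_abs,
      Real.norm_eq_abs, abs_of_nonneg (sq_nonneg _), abs_of_nonneg (hffnn p.1 p.2), one_mul]
  have hQnorm : ∀ σ τ (p : ℝ × ℝ), ‖Q σ τ p‖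
      = ‖φ p.1‖ * ‖φ p.2‖ * (fejer T (p.2 - p.1) * f p.1 * f p.2) := by
    intro σ τ p
    rw [hQdef]
    simp only [norm_mul]
    rw [norm_exp_I_mul_ofReal, Complex.norm_real, Real.norm_eq_abs,
      abs_of_nonneg (hffnn p.1 p.2), one_mul]
  -- integrability of R and Q
  have hRint : ∀ θ, Integrable (R θ) := by
    intro θ
    refine Integrable.mono' (conv2 hKint (ha2int.const_mul (M ^ 2))).1 (hRM θ)
      (Filter.Eventually.of_forall fun p => ?_)
    rw [hRnorm]
    calc ‖φ p.2‖ ^ 2 * (fejer T (p.2 - p.1) * f p.1 * f p.2)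
        ≤ ‖φ p.2‖ ^ 2 * (fejer T (p.2 - p.1) * M ^ 2) :=
          mul_le_mul_of_nonneg_left (hff p.1 p.2) (sq_nonneg _)
      _ = fejer T (p.2 - p.1) * (M ^ 2 * ‖φ p.2‖ ^ 2) := by ring
  have hQint : ∀ σ τ, Integrable (Q σ τ) := by
    intro σ τ
    have hdom : Integrable (fun p : ℝ × ℝ => (M ^ 2 / 2) *
        ((fejer T (p.2 - p.1) * ‖φ p.1‖ ^ 2)
          + fejer T (p.2 - p.1) * ‖φ p.2‖ ^ 2)) :=
      ((conv3 hKint ha2int).1.add (conv2 hKint ha2int).1).const_mul _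
    refine Integrable.mono' hdom (hQM σ τ) (Filter.Eventually.of_forall fun p => ?_)
    rw [hQnorm]
    have h1 : ‖φ p.1‖ * ‖φ p.2‖ * (fejer T (p.2 - p.1) * f p.1 * f p.2)
        ≤ ‖φ p.1‖ * ‖φ p.2‖ * (fejer T (p.2 - p.1) * M ^ 2) :=
      mul_le_mul_of_nonneg_left (hff p.1 p.2) (mul_nonneg (ha0 _) (ha0 _))
    have h2 : 2 * (‖φ p.1‖ * ‖φ p.2‖)
        ≤ ‖φ p.1‖ ^ 2 + ‖φ p.2‖ ^ 2 := by
      nlinarith [sq_nonneg (‖φ p.1‖ - ‖φ p.2‖)]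
    have h3 := mul_le_mul_of_nonneg_left h2
      (show (0:ℝ) ≤ fejer T (p.2 - p.1) * M ^ 2 / 2 by have := hK0 (p.2 - p.1); positivity)
    nlinarith [h1, h3]
  -- the combined integrands
  set P₁ : (ℝ × ℝ) → ℂ := fun p =>
    ((2 : ℂ) - 2 * Complex.exp (Complex.I * (((τ₁ - τ₂) * p.2 : ℝ) : ℂ)))
      * ((‖φ p.2‖ ^ 2 : ℝ) : ℂ)
      * ((fejer T (p.2 - p.1) * f p.1 * f p.2 : ℝ) : ℂ) with hP₁def
  set P₂ : (ℝ × ℝ) → ℂ := fun p =>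
    (Complex.exp (Complex.I * ((τ₁ * p.1 : ℝ) : ℂ)) - Complex.exp (Complex.I * ((τ₂ * p.1 : ℝ) : ℂ)))
      * (Complex.exp (Complex.I * ((τ₁ * p.2 : ℝ) : ℂ)) - Complex.exp (Complex.I * ((τ₂ * p.2 : ℝ) : ℂ)))
      * (φ p.1 * φ p.2) * ((fejer T (p.2 - p.1) * f p.1 * f p.2 : ℝ) : ℂ) with hP₂def
  have hid1 : ∀ p : ℝ × ℝ, R (τ₁ - τ₁) p - 2 * R (τ₁ - τ₂) p + R (τ₂ - τ₂) p = P₁ p := by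
    intro p
    simp only [hRdef, hP₁def, sub_self, zero_mul, Complex.ofReal_zero, mul_zero, Complex.exp_zero]
    ring
  have hid2 : ∀ p : ℝ × ℝ, Q τ₁ τ₁ p - Q τ₁ τ₂ p - Q τ₂ τ₁ p + Q τ₂ τ₂ p = P₂ p := by
    intro p
    simp only [hQdef, hP₂def, Complex.ofReal_add, mul_add, Complex.exp_add]
    ring
  have hP₁int : Integrable P₁ :=
    (((hRint (τ₁ - τ₁)).sub ((hRint (τ₁ - τ₂)).const_mul 2)).add (hRint (τ₂ - τ₂))).congr
      (Filter.Eventually.of_forall hid1)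
  have hP₂int : Integrable P₂ :=
    ((((hQint τ₁ τ₁).sub (hQint τ₁ τ₂)).sub (hQint τ₂ τ₁)).add (hQint τ₂ τ₂)).congr
      (Filter.Eventually.of_forall hid2)
  -- swap symmetry
  have hQswap_fun : ∀ z : ℝ × ℝ, Q τ₂ τ₁ z.swap = Q τ₁ τ₂ z := by
    intro z
    simp only [hQdef, Prod.fst_swap, Prod.snd_swap]
    rw [show (τ₂ * z.2 + τ₁ * z.1 : ℝ) = (τ₁ * z.1 + τ₂ * z.2 : ℝ) by ring,
      show (fejer T (z.1 - z.2) * f z.2 * f z.1 : ℝ)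
          = (fejer T (z.2 - z.1) * f z.1 * f z.2 : ℝ) by
        rw [show z.1 - z.2 = -(z.2 - z.1) by ring, fejer_even]; ring]
    ring
  have hQswap : ∫ p : ℝ × ℝ, Q τ₁ τ₂ p = ∫ p : ℝ × ℝ, Q τ₂ τ₁ p := by
    have h2 := integral_prod_swap (μ := (volume : Measure ℝ)) (ν := (volume : Measure ℝ)) (Q τ₂ τ₁)
    rw [Measure.volume_eq_prod ℝ ℝ, ← h2]
    congr 1
    funext z
    exact (hQswap_fun z).symm
  -- splitting the correlation integrals
  have hWeq : ∀ σ τ : ℝ, (∫ p : ℝ × ℝ,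
      (Complex.exp (Complex.I * (((σ - τ) * p.2 : ℝ) : ℂ)) * ((‖φ p.2‖ ^ 2 : ℝ) : ℂ)
        + Complex.exp (Complex.I * ((σ * p.1 + τ * p.2 : ℝ) : ℂ)) * φ p.1 * φ p.2)
      * ((fejer T (p.2 - p.1) * f p.1 * f p.2 : ℝ) : ℂ))
      = (∫ p : ℝ × ℝ, R (σ - τ) p) + ∫ p : ℝ × ℝ, Q σ τ p := by
    intro σ τ
    rw [← integral_add (hRint _) (hQint _ _)]
    congr 1
    funext p
    simp only [hRdef, hQdef]
    ring
  have hIeq : Ccorr c f φ T τ₁ τ₁ - 2 * Ccorr c f φ T τ₁ τ₂ + Ccorr c f φ T τ₂ τ₂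
      = ((2 * Real.pi / c ^ 2 : ℝ) : ℂ) * ((∫ p : ℝ × ℝ, P₁ p) + ∫ p : ℝ × ℝ, P₂ p) := by
    unfold Ccorr
    rw [hWeq τ₁ τ₁, hWeq τ₁ τ₂, hWeq τ₂ τ₂]
    have hp1 : ∫ p : ℝ × ℝ, P₁ p
        = (∫ p : ℝ × ℝ, R (τ₁ - τ₁) p) - 2 * (∫ p : ℝ × ℝ, R (τ₁ - τ₂) p)
          + ∫ p : ℝ × ℝ, R (τ₂ - τ₂) p := by
      rw [show P₁ = fun p => R (τ₁ - τ₁) p - 2 * R (τ₁ - τ₂) p + R (τ₂ - τ₂) p from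
        funext fun p => (hid1 p).symm]
      rw [integral_add (show Integrable (fun p : ℝ × ℝ => R (τ₁ - τ₁) p - 2 * R (τ₁ - τ₂) p)
            volume from (hRint _).sub ((hRint _).const_mul 2)) (hRint (τ₂ - τ₂)),
        integral_sub (hRint (τ₁ - τ₁)) (show Integrable (fun p : ℝ × ℝ => 2 * R (τ₁ - τ₂) p)
            volume from (hRint _).const_mul 2), integral_const_mul]
    have hp2 : ∫ p : ℝ × ℝ, P₂ p
        = (∫ p : ℝ × ℝ, Q τ₁ τ₁ p) - (∫ p : ℝ × ℝ, Q τ₁ τ₂ p) - (∫ p : ℝ × ℝ, Q τ₂ τ₁ p)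
          + ∫ p : ℝ × ℝ, Q τ₂ τ₂ p := by
      rw [show P₂ = fun p => Q τ₁ τ₁ p - Q τ₁ τ₂ p - Q τ₂ τ₁ p + Q τ₂ τ₂ p from
        funext fun p => (hid2 p).symm]
      rw [integral_add (show Integrable
            (fun p : ℝ × ℝ => Q τ₁ τ₁ p - Q τ₁ τ₂ p - Q τ₂ τ₁ p) volume from
            ((hQint τ₁ τ₁).sub (hQint τ₁ τ₂)).sub (hQint τ₂ τ₁)) (hQint τ₂ τ₂),
        integral_sub (show Integrable (fun p : ℝ × ℝ => Q τ₁ τ₁ p - Q τ₁ τ₂ p) volume from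
            (hQint τ₁ τ₁).sub (hQint τ₁ τ₂)) (hQint τ₂ τ₁),
        integral_sub (hQint τ₁ τ₁) (hQint τ₁ τ₂)]
    rw [hp1, hp2, hQswap]
    ring
  -- bound for P₁
  have hbound1 : ‖∫ p : ℝ × ℝ, P₁ p‖
      ≤ 4 * M ^ 2 * ∫ l : ℝ, |Real.sin ((τ₁ - τ₂) * l / 2)| * ‖φ l‖ ^ 2 := by
    have hwint := hw1int.const_mul (4 * M ^ 2)
    calc ‖∫ p : ℝ × ℝ, P₁ p‖ ≤ ∫ p : ℝ × ℝ, ‖P₁ p‖ := norm_integral_le_integral_norm _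
      _ ≤ ∫ p : ℝ × ℝ, fejer T (p.2 - p.1)
            * (4 * M ^ 2 * (|Real.sin ((τ₁ - τ₂) * p.2 / 2)| * ‖φ p.2‖ ^ 2)) := by
          refine integral_mono hP₁int.norm (conv2 hKint hwint).1 (fun p => ?_)
          have hnP₁ : ‖P₁ p‖ = ‖(2 : ℂ)
                - 2 * Complex.exp (Complex.I * (((τ₁ - τ₂) * p.2 : ℝ) : ℂ))‖
              * ‖φ p.2‖ ^ 2 * (fejer T (p.2 - p.1) * f p.1 * f p.2) := by
            simp only [hP₁def, norm_mul]
            rw [Complex.norm_real, Complex.norm_real, Real.norm_eq_abs, Real.norm_eq_abs,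
              abs_of_nonneg (sq_nonneg _),
              abs_of_nonneg (hffnn p.1 p.2)]
          have habs2' : ‖(2 : ℂ)
                - 2 * Complex.exp (Complex.I * (((τ₁ - τ₂) * p.2 : ℝ) : ℂ))‖
              = 2 * (2 * |Real.sin ((τ₁ - τ₂) * p.2 / 2)|) := by
            rw [show (2 : ℂ) - 2 * Complex.exp (Complex.I * (((τ₁ - τ₂) * p.2 : ℝ) : ℂ))
                = 2 * (1 - Complex.exp (Complex.I * (((τ₁ - τ₂) * p.2 : ℝ) : ℂ))) by ring,
              norm_mul, abs_one_sub_exp ((τ₁ - τ₂) * p.2), Complex.norm_two]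
          rw [hnP₁, habs2']
          calc 2 * (2 * |Real.sin ((τ₁ - τ₂) * p.2 / 2)|) * ‖φ p.2‖ ^ 2
                * (fejer T (p.2 - p.1) * f p.1 * f p.2)
              ≤ 2 * (2 * |Real.sin ((τ₁ - τ₂) * p.2 / 2)|) * ‖φ p.2‖ ^ 2
                * (fejer T (p.2 - p.1) * M ^ 2) :=
                mul_le_mul_of_nonneg_left (hff p.1 p.2) (by positivity)
            _ = fejer T (p.2 - p.1)
                * (4 * M ^ 2 * (|Real.sin ((τ₁ - τ₂) * p.2 / 2)| * ‖φ p.2‖ ^ 2)) := by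
                ring
      _ = (∫ l : ℝ, fejer T l) * ∫ l : ℝ,
            4 * M ^ 2 * (|Real.sin ((τ₁ - τ₂) * l / 2)| * ‖φ l‖ ^ 2) :=
          (conv2 hKint hwint).2
      _ = 4 * M ^ 2 * ∫ l : ℝ, |Real.sin ((τ₁ - τ₂) * l / 2)| * ‖φ l‖ ^ 2 := by
          rw [hKval, one_mul, integral_const_mul]
  -- bound for P₂
  have hbound2 : ‖∫ p : ℝ × ℝ, P₂ p‖
      ≤ 4 * M ^ 2 * ∫ l : ℝ, (|Real.sin ((τ₁ - τ₂) * l / 2)| * ‖φ l‖) ^ 2 := by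
    have hdomint : Integrable (fun p : ℝ × ℝ => (2 * M ^ 2) *
        ((fejer T (p.2 - p.1) * (|Real.sin ((τ₁ - τ₂) * p.1 / 2)| * ‖φ p.1‖) ^ 2)
          + fejer T (p.2 - p.1) * (|Real.sin ((τ₁ - τ₂) * p.2 / 2)| * ‖φ p.2‖) ^ 2)) :=
      ((conv3 hKint hg2int).1.add (conv2 hKint hg2int).1).const_mul _
    calc ‖∫ p : ℝ × ℝ, P₂ p‖ ≤ ∫ p : ℝ × ℝ, ‖P₂ p‖ := norm_integral_le_integral_norm _
      _ ≤ ∫ p : ℝ × ℝ, (2 * M ^ 2) *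
            ((fejer T (p.2 - p.1) * (|Real.sin ((τ₁ - τ₂) * p.1 / 2)| * ‖φ p.1‖) ^ 2)
              + fejer T (p.2 - p.1)
                * (|Real.sin ((τ₁ - τ₂) * p.2 / 2)| * ‖φ p.2‖) ^ 2) := by
          refine integral_mono hP₂int.norm hdomint (fun p => ?_)
          have hnP₂ : ‖P₂ p‖ = (2 * |Real.sin ((τ₁ - τ₂) * p.1 / 2)|)
              * (2 * |Real.sin ((τ₁ - τ₂) * p.2 / 2)|)
              * (‖φ p.1‖ * ‖φ p.2‖)
              * (fejer T (p.2 - p.1) * f p.1 * f p.2) := by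
            simp only [hP₂def, norm_mul]
            rw [abs_exp_sub_exp, abs_exp_sub_exp,
              show (τ₁ * p.1 - τ₂ * p.1) / 2 = (τ₁ - τ₂) * p.1 / 2 by ring,
              show (τ₁ * p.2 - τ₂ * p.2) / 2 = (τ₁ - τ₂) * p.2 / 2 by ring,
              Complex.norm_real, Real.norm_eq_abs, abs_of_nonneg (hffnn p.1 p.2)]
          rw [hnP₂]
          have h1 : (2 * |Real.sin ((τ₁ - τ₂) * p.1 / 2)|)
              * (2 * |Real.sin ((τ₁ - τ₂) * p.2 / 2)|)
              * (‖φ p.1‖ * ‖φ p.2‖)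
              * (fejer T (p.2 - p.1) * f p.1 * f p.2)
              ≤ (2 * |Real.sin ((τ₁ - τ₂) * p.1 / 2)|)
              * (2 * |Real.sin ((τ₁ - τ₂) * p.2 / 2)|)
              * (‖φ p.1‖ * ‖φ p.2‖)
              * (fejer T (p.2 - p.1) * M ^ 2) :=
            mul_le_mul_of_nonneg_left (hff p.1 p.2) (by positivity)
          have h2 := mul_le_mul_of_nonneg_left
            (two_mul_le_add_sq (|Real.sin ((τ₁ - τ₂) * p.1 / 2)| * ‖φ p.1‖)
              (|Real.sin ((τ₁ - τ₂) * p.2 / 2)| * ‖φ p.2‖))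
            (show (0:ℝ) ≤ 2 * M ^ 2 * fejer T (p.2 - p.1) by have := hK0 (p.2 - p.1); positivity)
          nlinarith [h1, h2]
      _ = (2 * M ^ 2) * (((∫ l : ℝ, fejer T l)
            * ∫ l : ℝ, (|Real.sin ((τ₁ - τ₂) * l / 2)| * ‖φ l‖) ^ 2)
          + (∫ l : ℝ, fejer T l)
            * ∫ l : ℝ, (|Real.sin ((τ₁ - τ₂) * l / 2)| * ‖φ l‖) ^ 2) := by
          rw [integral_const_mul, integral_add (conv3 hKint hg2int).1 (conv2 hKint hg2int).1,
            (conv3 hKint hg2int).2, (conv2 hKint hg2int).2]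
      _ = 4 * M ^ 2 * ∫ l : ℝ, (|Real.sin ((τ₁ - τ₂) * l / 2)| * ‖φ l‖) ^ 2 := by
          rw [hKval]; ring
  -- Hölder and elementary comparisons
  have hg2eq : (fun l : ℝ => (|Real.sin ((τ₁ - τ₂) * l / 2)| * ‖φ l‖) ^ 2)
      = fun l : ℝ => Real.sin ((τ₁ - τ₂) * l / 2) ^ 2 * ‖φ l‖ ^ 2 := by
    funext l
    rw [mul_pow, sq_abs]
  have hs2int : Integrable (fun l : ℝ => Real.sin ((τ₁ - τ₂) * l / 2) ^ 2 * ‖φ l‖ ^ 2) := by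
    rw [← hg2eq]; exact hg2int
  have hA0 : 0 ≤ ∫ l : ℝ, Real.sin ((τ₁ - τ₂) * l / 2) ^ 2 * ‖φ l‖ ^ 2 :=
    integral_nonneg fun l => by positivity
  have hB0 : 0 ≤ ∫ l : ℝ, ‖φ l‖ ^ 2 := integral_nonneg fun l => by positivity
  have hAB : (∫ l : ℝ, Real.sin ((τ₁ - τ₂) * l / 2) ^ 2 * ‖φ l‖ ^ 2)
      ≤ ∫ l : ℝ, ‖φ l‖ ^ 2 := by
    refine integral_mono hs2int ha2int (fun l => ?_)
    exact mul_le_of_le_one_left (sq_nonneg _) (Real.sin_sq_le_one _)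
  have hHolder : (∫ l : ℝ, |Real.sin ((τ₁ - τ₂) * l / 2)| * ‖φ l‖ ^ 2)
      ≤ Real.sqrt (∫ l : ℝ, Real.sin ((τ₁ - τ₂) * l / 2) ^ 2 * ‖φ l‖ ^ 2)
        * Real.sqrt (∫ l : ℝ, ‖φ l‖ ^ 2) := by
    have h22 : ENNReal.ofReal (2:ℝ) = 2 := by norm_num
    have hconj : Real.HolderConjugate 2 2 := Real.HolderConjugate.two_two
    have hmem1 : MemLp (fun l : ℝ => |Real.sin ((τ₁ - τ₂) * l / 2)| * ‖φ l‖)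
        (ENNReal.ofReal 2) volume := by
      rw [h22]
      refine MemLp.of_le haL2 hgM (Filter.Eventually.of_forall fun l => ?_)
      rw [Real.norm_eq_abs, Real.norm_eq_abs, abs_of_nonneg (by positivity),
        abs_of_nonneg (ha0 l)]
      exact mul_le_of_le_one_left (ha0 l) (Real.abs_sin_le_one _)
    have hmem2 : MemLp (fun l : ℝ => ‖φ l‖) (ENNReal.ofReal 2) volume := by
      rw [h22]; exact haL2
    have hH := integral_mul_le_Lp_mul_Lq_of_nonneg hconj
      (f := fun l : ℝ => |Real.sin ((τ₁ - τ₂) * l / 2)| * ‖φ l‖)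
      (g := fun l : ℝ => ‖φ l‖)
      (Filter.Eventually.of_forall fun l => by positivity)
      (Filter.Eventually.of_forall fun l => ha0 l) hmem1 hmem2
    have hrw2 : ∀ x : ℝ, x ^ (2:ℝ) = x ^ 2 := fun x => by
      rw [show (2:ℝ) = ((2:ℕ):ℝ) by norm_num, Real.rpow_natCast]
    simp only [hrw2] at hH
    calc (∫ l : ℝ, |Real.sin ((τ₁ - τ₂) * l / 2)| * ‖φ l‖ ^ 2)
        = ∫ l : ℝ, (|Real.sin ((τ₁ - τ₂) * l / 2)| * ‖φ l‖) * ‖φ l‖ := by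
          congr 1; funext l; ring
      _ ≤ (∫ l : ℝ, (|Real.sin ((τ₁ - τ₂) * l / 2)| * ‖φ l‖) ^ 2) ^ (1/2 : ℝ)
          * (∫ l : ℝ, ‖φ l‖ ^ 2) ^ (1/2 : ℝ) := hH
      _ = Real.sqrt (∫ l : ℝ, Real.sin ((τ₁ - τ₂) * l / 2) ^ 2 * ‖φ l‖ ^ 2)
          * Real.sqrt (∫ l : ℝ, ‖φ l‖ ^ 2) := by
          rw [hg2eq, ← Real.sqrt_eq_rpow, ← Real.sqrt_eq_rpow]
  have hAsqrt : (∫ l : ℝ, Real.sin ((τ₁ - τ₂) * l / 2) ^ 2 * ‖φ l‖ ^ 2)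
      ≤ Real.sqrt (∫ l : ℝ, Real.sin ((τ₁ - τ₂) * l / 2) ^ 2 * ‖φ l‖ ^ 2)
        * Real.sqrt (∫ l : ℝ, ‖φ l‖ ^ 2) := by
    calc (∫ l : ℝ, Real.sin ((τ₁ - τ₂) * l / 2) ^ 2 * ‖φ l‖ ^ 2)
        = Real.sqrt (∫ l : ℝ, Real.sin ((τ₁ - τ₂) * l / 2) ^ 2 * ‖φ l‖ ^ 2)
          * Real.sqrt (∫ l : ℝ, Real.sin ((τ₁ - τ₂) * l / 2) ^ 2 * ‖φ l‖ ^ 2) :=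
          (Real.mul_self_sqrt hA0).symm
      _ ≤ _ := mul_le_mul_of_nonneg_left (Real.sqrt_le_sqrt hAB) (Real.sqrt_nonneg _)
  -- final assembly
  rw [hIeq, norm_mul]
  have hcoef : ‖((2 * Real.pi / c ^ 2 : ℝ) : ℂ)‖ = 2 * Real.pi / c ^ 2 := by
    rw [Complex.norm_real, Real.norm_eq_abs, abs_of_nonneg (by positivity)]
  rw [hcoef]
  have hsum : ‖(∫ p : ℝ × ℝ, P₁ p) + ∫ p : ℝ × ℝ, P₂ p‖
      ≤ 8 * M ^ 2 * (Real.sqrt (∫ l : ℝ, Real.sin ((τ₁ - τ₂) * l / 2) ^ 2 * ‖φ l‖ ^ 2)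
        * Real.sqrt (∫ l : ℝ, ‖φ l‖ ^ 2)) := by
    calc ‖(∫ p : ℝ × ℝ, P₁ p) + ∫ p : ℝ × ℝ, P₂ p‖
        ≤ ‖∫ p : ℝ × ℝ, P₁ p‖ + ‖∫ p : ℝ × ℝ, P₂ p‖ :=
          norm_add_le _ _
      _ ≤ (4 * M ^ 2 * ∫ l : ℝ, |Real.sin ((τ₁ - τ₂) * l / 2)| * ‖φ l‖ ^ 2)
          + 4 * M ^ 2 * ∫ l : ℝ, (|Real.sin ((τ₁ - τ₂) * l / 2)| * ‖φ l‖) ^ 2 := by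
          exact add_le_add hbound1 hbound2
      _ ≤ (4 * M ^ 2 * (Real.sqrt (∫ l : ℝ, Real.sin ((τ₁ - τ₂) * l / 2) ^ 2 * ‖φ l‖ ^ 2)
            * Real.sqrt (∫ l : ℝ, ‖φ l‖ ^ 2)))
          + 4 * M ^ 2 * (Real.sqrt (∫ l : ℝ, Real.sin ((τ₁ - τ₂) * l / 2) ^ 2 * ‖φ l‖ ^ 2)
            * Real.sqrt (∫ l : ℝ, ‖φ l‖ ^ 2)) := by
          refine add_le_add (mul_le_mul_of_nonneg_left hHolder (by positivity)) ?_
          rw [hg2eq]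
          exact mul_le_mul_of_nonneg_left hAsqrt (by positivity)
      _ = 8 * M ^ 2 * (Real.sqrt (∫ l : ℝ, Real.sin ((τ₁ - τ₂) * l / 2) ^ 2 * ‖φ l‖ ^ 2)
          * Real.sqrt (∫ l : ℝ, ‖φ l‖ ^ 2)) := by ring
  calc 2 * Real.pi / c ^ 2 * ‖(∫ p : ℝ × ℝ, P₁ p) + ∫ p : ℝ × ℝ, P₂ p‖
      ≤ 2 * Real.pi / c ^ 2 * (8 * M ^ 2
        * (Real.sqrt (∫ l : ℝ, Real.sin ((τ₁ - τ₂) * l / 2) ^ 2 * ‖φ l‖ ^ 2)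
          * Real.sqrt (∫ l : ℝ, ‖φ l‖ ^ 2))) :=
        mul_le_mul_of_nonneg_left hsum (by positivity)
    _ = (16 * Real.pi / c ^ 2) * M ^ 2 * Real.sqrt (∫ l : ℝ, ‖φ l‖ ^ 2)
        * Real.sqrt (∫ l : ℝ, Real.sin ((τ₁ - τ₂) * l / 2) ^ 2 * ‖φ l‖ ^ 2) := by
        ring
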